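/- arXiv:1811.03338 — 3 statements merged into one kernel-verified Lean document; each statement's English description precedes it below -/
import Mathlib

section
/- In F₀, the elements x_{k,0} = (Q^0)^k and x_{k,i} = (Q^0)^{k−i} Q^1 (Q^0)^{i−1} for 1 ≤ i ≤ k are primitive in the component F₀[k] (with unit (Q^0)^k), i.e. ψ(x_{k,i}) = x_{k,i} ⊗ (Q^0)^k + (Q^0)^k ⊗ x_{k,i}. Moreover {x_{k,i} : 1 ≤ i ≤ k} is an 𝔽₂-basis for the primitive elements of the component coalgebra F₀[k]. -/
/-! In the monomial basis `QI I` of `F₀` (indexed by lists `I`), the coefficient of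
`QI J ⊗ QI T` in `ψ z` is the coefficient of `QI (J + T)` in `z`, where `J + T` is the
componentwise sum of lists of equal length. Hence for `z` primitive with respect to `(Q⁰)ᵏ`,
the coefficient `z_{J+T}` equals `[T = 0ᵏ] z_J + [J = 0ᵏ] z_T`. Taking `J = T = 0ᵏ` gives
`z_{0ᵏ} = 2 z_{0ᵏ}`, so `z_{0ᵏ} = 0`. Every other monomial that is not some `x_{k,i}` (one of
length `≠ k`, or of length `k` with index sum `≥ 2`) is `J + T` with `J, T ≠ 0ᵏ`, so its
coefficient vanishes. What survives are the monomials of length `k` and index sum `1`, which are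
exactly the `x_{k,i}`. -/

open scoped TensorProduct

noncomputable section

abbrev F0 : Type := FreeAlgebra (ZMod 2) ℕ

def Q (i : ℕ) : F0 := FreeAlgebra.ι (ZMod 2) i

def QI (I : List ℕ) : F0 := (I.map Q).prod

/-- The coproduct of `F₀`, `ψ(Q^i) = Σ_t Q^{i−t} ⊗ Q^t`. -/
def psi : F0 →ₐ[ZMod 2] F0 ⊗[ZMod 2] F0 :=
  FreeAlgebra.lift (ZMod 2) fun i => ∑ t ∈ Finset.range (i + 1), Q (i - t) ⊗ₜ[ZMod 2] Q t

/-- `F₀[k]` : the span of the monomials of length `k`. -/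
def Fk (k : ℕ) : Submodule (ZMod 2) F0 :=
  Submodule.span (ZMod 2) {z | ∃ I : List ℕ, I.length = k ∧ z = QI I}

/-- `x_{k,0} = (Q^0)^k`, the grouplike element of `F₀[k]`. -/
def g0 (k : ℕ) : F0 := QI (List.replicate k 0)

/-- `x_{k,i} = (Q^0)^{k−i} Q^1 (Q^0)^{i−1}` for `1 ≤ i ≤ k`. -/
def x (k i : ℕ) : F0 := QI (List.replicate (k - i) 0 ++ 1 :: List.replicate (i - 1) 0)

open Finset.HasAntidiagonal

@[simp] lemma QI_cons (i : ℕ) (I : List ℕ) : QI (i :: I) = Q i * QI I := List.prod_cons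

@[simp] lemma QI_append (I J : List ℕ) : QI (I ++ J) = QI I * QI J := by simp [QI]

lemma g0_add (m n : ℕ) : g0 (m + n) = g0 m * g0 n := by
  rw [g0, List.replicate_add, QI_append, g0, g0]

lemma g0_succ (n : ℕ) : g0 (n + 1) = Q 0 * g0 n := by
  rw [g0, List.replicate_succ, QI_cons, g0]

lemma psi_Q (i : ℕ) : psi (Q i) = ∑ p ∈ antidiagonal i, Q p.1 ⊗ₜ[ZMod 2] Q p.2 := by
  rw [← Finset.Nat.sum_antidiagonal_swap, Finset.Nat.sum_antidiagonal_eq_sum_range_succ_mk]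
  simp [psi, Q]

lemma psi_g0 (n : ℕ) : psi (g0 n) = g0 n ⊗ₜ[ZMod 2] g0 n := by
  induction n with
  | zero => simp [g0, QI, Algebra.TensorProduct.one_def]
  | succ n ih => simp [g0_succ, psi_Q, ih]

lemma psi_x {k i : ℕ} (hi : 1 ≤ i) (hik : i ≤ k) :
    psi (x k i) = x k i ⊗ₜ[ZMod 2] g0 k + g0 k ⊗ₜ[ZMod 2] x k i := by
  have hx : x k i = g0 (k - i) * (Q 1 * g0 (i - 1)) := by simp [x, g0]
  have hg : g0 k = g0 (k - i) * (Q 0 * g0 (i - 1)) := by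
    rw [← g0_succ, ← g0_add]
    congr 1
    omega
  have psi_Q1 : psi (Q 1) = Q 1 ⊗ₜ[ZMod 2] Q 0 + Q 0 ⊗ₜ[ZMod 2] Q 1 := by
    simp [psi_Q, Finset.Nat.antidiagonal_succ, add_comm]
  rw [hx, hg, map_mul, map_mul, psi_g0, psi_g0, psi_Q1]
  simp only [mul_add, add_mul, Algebra.TensorProduct.tmul_mul_tmul]

def antidiagonalList : List ℕ → Finset (List ℕ × List ℕ)
  | [] => {([], [])}
  | i :: I => (antidiagonal i ×ˢ antidiagonalList I).image
      fun p => (p.1.1 :: p.2.1, p.1.2 :: p.2.2)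

lemma mem_antidiagonalList {I J T : List ℕ} :
    (J, T) ∈ antidiagonalList I ↔ J.length = T.length ∧ I = List.zipWith (· + ·) J T := by
  induction I generalizing J T with
  | nil => cases J <;> cases T <;> simp [antidiagonalList]
  | cons i I ih => cases J <;> cases T <;> simp [antidiagonalList, ih, and_left_comm, eq_comm]

lemma psi_QI (I : List ℕ) :
    psi (QI I) = ∑ p ∈ antidiagonalList I, QI p.1 ⊗ₜ[ZMod 2] QI p.2 := by
  induction I with
  | nil => simp [antidiagonalList, QI, Algebra.TensorProduct.one_def]
  | cons i I ih =>
    have hinj : Set.InjOn (fun p : (ℕ × ℕ) × List ℕ × List ℕ => (p.1.1 :: p.2.1, p.1.2 :: p.2.2))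
        ↑(antidiagonal i ×ˢ antidiagonalList I) := by
      rintro ⟨⟨a, b⟩, J, T⟩ - ⟨⟨a', b'⟩, J', T'⟩ - h
      simp_all
    rw [antidiagonalList, Finset.sum_image hinj, Finset.sum_product, QI_cons, map_mul, psi_Q, ih,
      Finset.sum_mul_sum]
    simp [Algebra.TensorProduct.tmul_mul_tmul]

def basisQI : Module.Basis (List ℕ) (ZMod 2) F0 :=
  (FreeAlgebra.basisFreeMonoid (ZMod 2) ℕ).reindex FreeMonoid.toList

@[simp] lemma basisQI_apply (I : List ℕ) : basisQI I = QI I := by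
  simp [basisQI, FreeAlgebra.basisFreeMonoid, FreeAlgebra.equivMonoidAlgebraFreeMonoid, QI]
  rfl

lemma basisQI_repr_QI (I : List ℕ) : basisQI.repr (QI I) = Finsupp.single I 1 := by
  rw [← basisQI_apply, Module.Basis.repr_self]

lemma tensorProduct_repr_QI_tmul_QI (I J : List ℕ) :
    (basisQI.tensorProduct basisQI).repr (QI I ⊗ₜ[ZMod 2] QI J) = Finsupp.single (I, J) 1 := by
  rw [← basisQI_apply, ← basisQI_apply, ← Module.Basis.tensorProduct_apply, Module.Basis.repr_self]

lemma tensorProduct_repr_psi (z : F0) {J T : List ℕ} (h : J.length = T.length) :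
    (basisQI.tensorProduct basisQI).repr (psi z) (J, T) =
      basisQI.repr z (List.zipWith (· + ·) J T) := by
  suffices Finsupp.lapply (J, T) ∘ₗ (basisQI.tensorProduct basisQI).repr.toLinearMap ∘ₗ
      psi.toLinearMap = Finsupp.lapply (List.zipWith (· + ·) J T) ∘ₗ basisQI.repr.toLinearMap from
    LinearMap.congr_fun this z
  refine basisQI.ext fun I => ?_
  simp only [LinearMap.comp_apply, AlgHom.toLinearMap_apply, LinearEquiv.coe_coe,
    Finsupp.lapply_apply, basisQI_apply, basisQI_repr_QI, psi_QI, map_sum,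
    tensorProduct_repr_QI_tmul_QI, Finsupp.single_apply]
  simp [Finset.sum_ite_eq', mem_antidiagonalList, h]

lemma repr_zipWith_of_psi_eq {k : ℕ} {z : F0}
    (hz : psi z = z ⊗ₜ[ZMod 2] g0 k + g0 k ⊗ₜ[ZMod 2] z) {J T : List ℕ}
    (h : J.length = T.length) :
    basisQI.repr z (List.zipWith (· + ·) J T) =
      (if T = List.replicate k 0 then basisQI.repr z J else 0) +
        (if J = List.replicate k 0 then basisQI.repr z T else 0) := by
  rw [← tensorProduct_repr_psi z h, hz]
  simp [Module.Basis.tensorProduct_repr_tmul_apply, g0, basisQI_repr_QI, Finsupp.single_apply,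
    eq_comm]

lemma exists_zipWith_add_eq_of_sum_eq {I : List ℕ} {a b : ℕ} (h : I.sum = a + b) :
    ∃ J T : List ℕ, J.length = T.length ∧ I = List.zipWith (· + ·) J T ∧ J.sum = a ∧ T.sum = b := by
  induction I generalizing a b with
  | nil =>
    rw [List.sum_nil] at h
    exact ⟨[], [], rfl, rfl, by simp; omega, by simp; omega⟩
  | cons i I ih =>
    rw [List.sum_cons] at h
    by_cases hai : a ≤ i
    · obtain ⟨J, T, hJT, hI, hJ, hT⟩ := ih (a := 0) (b := I.sum) (zero_add _).symm
      exact ⟨a :: J, (i - a) :: T, by simp [hJT], by simp [hI]; omega, by simp [hJ],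
        by simp [hT]; omega⟩
    · obtain ⟨J, T, hJT, hI, hJ, hT⟩ := ih (a := a - i) (b := b) (by omega)
      exact ⟨i :: J, 0 :: T, by simp [hJT], by simp [hI], by simp [hJ]; omega, by simp [hT]⟩

lemma exists_eq_replicate_append_of_sum_eq_one {I : List ℕ} (h : I.sum = 1) :
    ∃ a b, I = List.replicate a 0 ++ 1 :: List.replicate b 0 := by
  induction I with
  | nil => simp at h
  | cons i I ih =>
    rw [List.sum_cons] at h
    obtain rfl | rfl : i = 0 ∨ i = 1 := by omega
    · obtain ⟨a, b, rfl⟩ := ih (by omega)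
      exact ⟨a + 1, b, rfl⟩
    · refine ⟨0, I.length, congrArg (1 :: ·) ?_⟩
      exact List.eq_replicate_iff.mpr ⟨rfl, List.sum_eq_zero_iff.mp (by omega)⟩

def xWord (k i : ℕ) : List ℕ := List.replicate (k - i) 0 ++ 1 :: List.replicate (i - 1) 0

lemma x_eq_basisQI (k i : ℕ) : x k i = basisQI (xWord k i) := by
  rw [basisQI_apply, x, xWord]

lemma xWord_succ_injective (k : ℕ) : Function.Injective fun i : Fin k => xWord k (i + 1) := by
  intro i j h
  have := congrArg (List.idxOf 1) h
  simp [xWord, List.idxOf_append_of_notMem] at this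
  omega

lemma exists_zipWith_add_eq_ne_replicate {I : List ℕ} {k a b : ℕ} (hab : I.sum = a + b)
    (hne : I.length = k → a ≠ 0 ∧ b ≠ 0) :
    ∃ J T : List ℕ, J.length = T.length ∧ I = List.zipWith (· + ·) J T ∧
      J ≠ List.replicate k 0 ∧ T ≠ List.replicate k 0 := by
  obtain ⟨J, T, hJT, hI, hJ, hT⟩ := exists_zipWith_add_eq_of_sum_eq hab
  have ne_replicate : ∀ L : List ℕ, L.length = I.length → (I.length = k → L.sum ≠ 0) →
      L ≠ List.replicate k 0 := fun L hL hs hLk =>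
    hs (by rw [← hL, hLk, List.length_replicate]) (by rw [hLk, List.sum_replicate, smul_zero])
  refine ⟨J, T, hJT, hI, ne_replicate J (by simp [hI, hJT]) ?_, ne_replicate T (by simp [hI, hJT]) ?_⟩
  · exact fun hk => hJ ▸ (hne hk).1
  · exact fun hk => hT ▸ (hne hk).2

lemma exists_xWord_eq_of_repr_ne_zero {k : ℕ} {z : F0}
    (hz : psi z = z ⊗ₜ[ZMod 2] g0 k + g0 k ⊗ₜ[ZMod 2] z) {I : List ℕ}
    (hI : basisQI.repr z I ≠ 0) : ∃ i : Fin k, xWord k (i + 1) = I := by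
  have no_split : ∀ a b, I.sum = a + b → (I.length = k → a ≠ 0 ∧ b ≠ 0) → False := by
    intro a b hab hne
    obtain ⟨J, T, hJT, rfl, hJ, hT⟩ := exists_zipWith_add_eq_ne_replicate hab hne
    exact hI (by rw [repr_zipWith_of_psi_eq hz hJT, if_neg hT, if_neg hJ, add_zero])
  by_cases hk : I.length = k
  · obtain h0 | h1 | h2 : I.sum = 0 ∨ I.sum = 1 ∨ 2 ≤ I.sum := by omega
    · have hI0 : I = List.replicate k 0 :=
        List.eq_replicate_iff.mpr ⟨hk, List.sum_eq_zero_iff.mp h0⟩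
      have hc := repr_zipWith_of_psi_eq hz (J := List.replicate k 0) (T := List.replicate k 0) rfl
      rw [List.zipWith_replicate, min_self, if_pos rfl, left_eq_add, ← hI0] at hc
      exact (hI hc).elim
    · obtain ⟨a, b, rfl⟩ := exists_eq_replicate_append_of_sum_eq_one h1
      simp only [List.length_append, List.length_replicate, List.length_cons] at hk
      exact ⟨⟨b, by omega⟩, by simp [xWord, ← hk]⟩
    · exact (no_split 1 (I.sum - 1) (by omega) fun _ => ⟨one_ne_zero, by omega⟩).elim
  · exact (no_split I.sum 0 rfl (absurd · hk)).elim

def primitiveSubmodule (k : ℕ) : Submodule (ZMod 2) F0 :=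
  LinearMap.eqLocus psi.toLinearMap
    ((TensorProduct.mk (ZMod 2) F0 F0).flip (g0 k) + TensorProduct.mk (ZMod 2) F0 F0 (g0 k))

theorem x_primitive_basis_general (k : ℕ) :
    (∀ i, 1 ≤ i → i ≤ k →
        psi (x k i) = x k i ⊗ₜ[ZMod 2] g0 k + g0 k ⊗ₜ[ZMod 2] x k i) ∧
    LinearIndependent (ZMod 2) (fun i : Fin k => x k (i.1 + 1)) ∧
    (Submodule.span (ZMod 2) (Set.range fun i : Fin k => x k (i.1 + 1)) : Set F0) =
      {z | z ∈ Fk k ∧ psi z = z ⊗ₜ[ZMod 2] g0 k + g0 k ⊗ₜ[ZMod 2] z} := by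
  have hx : (fun i : Fin k => x k (i.1 + 1)) = basisQI ∘ fun i : Fin k => xWord k (i.1 + 1) :=
    funext fun i => x_eq_basisQI k (i + 1)
  refine ⟨fun i hi hik => psi_x hi hik, ?_, Set.Subset.antisymm ?_ ?_⟩
  · rw [hx]
    exact basisQI.linearIndependent.comp _ (xWord_succ_injective k)
  · have hle : Submodule.span (ZMod 2) (Set.range fun i : Fin k => x k (i.1 + 1)) ≤
        Fk k ⊓ primitiveSubmodule k := by
      rw [Submodule.span_le]
      rintro _ ⟨i, rfl⟩
      refine ⟨Submodule.subset_span ⟨xWord k (i + 1), ?_, rfl⟩, psi_x (by omega) i.2⟩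
      simp [xWord]
    exact fun z hz => hle hz
  · rintro z ⟨-, hz⟩
    rw [SetLike.mem_coe, hx, Set.range_comp, basisQI.mem_span_image]
    intro I hI
    exact exists_xWord_eq_of_repr_ne_zero hz (Finsupp.mem_support_iff.mp hI)

/-- Each `x_{k,i}` (for `1 ≤ i ≤ k`) is primitive in the component `F₀[k]` with grouplike
`(Q^0)^k`, and `{x_{k,i} : 1 ≤ i ≤ k}` is an `𝔽₂`-basis for the primitive elements of
`F₀[k]`. -/
theorem x_primitive_basis (k : ℕ) (hk : 1 ≤ k) :
    (∀ i, 1 ≤ i → i ≤ k →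
        psi (x k i) = x k i ⊗ₜ[ZMod 2] g0 k + g0 k ⊗ₜ[ZMod 2] x k i) ∧
    LinearIndependent (ZMod 2) (fun i : Fin k => x k (i.1 + 1)) ∧
    (Submodule.span (ZMod 2) (Set.range fun i : Fin k => x k (i.1 + 1)) : Set F0) =
      {z | z ∈ Fk k ∧ psi z = z ⊗ₜ[ZMod 2] g0 k + g0 k ⊗ₜ[ZMod 2] z} :=
  x_primitive_basis_general k

end
end

section
/- The graded dual coalgebra structure restricted to F₀[k]: identifying F₀[k] with 𝔽₂-linear combinations of ℕ^k via Q^J ↔ J, the dual algebra F₀[k]* (with product dual to ψ) is a polynomial algebra over 𝔽₂ on the k generators y_{k,i} = (x_{k,i})* for 1 ≤ i ≤ k; equivalently, the monomials ξ^Λ = Π_i y_{k,i}^{λ_i} for Λ ∈ ℕ^k form a basis of F₀[k]*, and the pairing satisfies: ⟨ξ^Λ, Q^J⟩ = 1 mod 2 implies J ≥ Λ(I) in the excess order, where Λ(I) = Σ λ_i I(x_{k,i}). -/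
open scoped TensorProduct

noncomputable section

/-- The component `F₀[k]`, with `𝔽₂`-basis the monomials `Q^J`, `J ∈ ℕ^k`
(identify `Q^J ↔ J`). -/
abbrev Mk (k : ℕ) : Type := (Fin k → ℕ) →₀ ZMod 2

/-- The coproduct of `F₀[k]` : `ψ(Q^J) = Σ_{J₁+J₂=J} Q^{J₁} ⊗ Q^{J₂}`. -/
def psiM (k : ℕ) : Mk k →ₗ[ZMod 2] Mk k ⊗[ZMod 2] Mk k :=
  Finsupp.lift (Mk k ⊗[ZMod 2] Mk k) (ZMod 2) (Fin k → ℕ) fun J =>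
    ∑ J₁ ∈ Finset.Iic J, Finsupp.single J₁ 1 ⊗ₜ[ZMod 2] Finsupp.single (J - J₁) 1

/-- The product of `F₀[k]*`, dual to the coproduct `ψ` of `F₀[k]`. -/
def conv (k : ℕ) (f g : Module.Dual (ZMod 2) (Mk k)) : Module.Dual (ZMod 2) (Mk k) :=
  (LinearMap.mul' (ZMod 2) (ZMod 2)).comp ((TensorProduct.map f g).comp (psiM k))

/-- The unit of `F₀[k]*`, dual to the grouplike monomial `(Q^0)^k`. -/
def oneD (k : ℕ) : Module.Dual (ZMod 2) (Mk k) := Finsupp.lapply (0 : Fin k → ℕ)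

/-- `y_{k,i} = (x_{k,i})*`, the functional dual to the primitive monomial
`x_{k,i} = (Q^0)^{k−i} Q^1 (Q^0)^{i−1}` (whose sequence is `Pi.single i 1`). -/
def y (k : ℕ) (i : Fin k) : Module.Dual (ZMod 2) (Mk k) :=
  Finsupp.lapply (Pi.single i 1)

/-- Convolution powers in `F₀[k]*`. -/
def convPow (k : ℕ) (f : Module.Dual (ZMod 2) (Mk k)) : ℕ → Module.Dual (ZMod 2) (Mk k)
  | 0 => oneD k
  | n + 1 => conv k f (convPow k f n)

/-- The monomial `ξ^Λ = Π_i y_{k,i}^{λ_i}` in the dual algebra `F₀[k]*`. -/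
def xi (k : ℕ) (Λ : Fin k → ℕ) : Module.Dual (ZMod 2) (Mk k) :=
  (List.ofFn fun i : Fin k => convPow k (y k i) (Λ i)).foldr (conv k) (oneD k)

/-- Truncated excesses `e(I_{t+1}) = i_{t+1} − (i_t + ⋯ + i_1)`; index `t : Fin k`
counts positions from the right. -/
def eT {k : ℕ} (I : Fin k → ℕ) (t : Fin k) : ℤ :=
  (I t : ℤ) - ∑ s ∈ Finset.Iio t, (I s : ℤ)

/-- The excess (total) order on `ℕ^k` : `I ≤ J` iff `I = J` or the truncated excesses of
`I` are lexicographically smaller (at the smallest index where they differ). -/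
def exLE {k : ℕ} (I J : Fin k → ℕ) : Prop :=
  I = J ∨ ∃ t, (∀ s < t, eT I s = eT J s) ∧ eT I t < eT J t

lemma conv_single (k : ℕ) (f g : Module.Dual (ZMod 2) (Mk k)) (J : Fin k → ℕ) :
    conv k f g (Finsupp.single J 1) =
      ∑ J₁ ∈ Finset.Iic J, f (Finsupp.single J₁ 1) * g (Finsupp.single (J - J₁) 1) := by
  simp [conv, psiM, Finsupp.sum_single_index]

lemma conv_lapply (k : ℕ) (A B : Fin k → ℕ) :
    conv k (Finsupp.lapply A) (Finsupp.lapply B) = (Finsupp.lapply (A + B) : Module.Dual (ZMod 2) (Mk k)) := by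
  apply Finsupp.lhom_ext
  intro J c
  have h1 : (Finsupp.single J c : Mk k) = c • Finsupp.single J 1 := by
    simp [Finsupp.smul_single]
  rw [h1, map_smul, map_smul, conv_single]
  congr 1
  have : ∀ J₁ ∈ Finset.Iic J,
      (Finsupp.lapply A : Module.Dual (ZMod 2) (Mk k)) (Finsupp.single J₁ 1) *
        (Finsupp.lapply B : Module.Dual (ZMod 2) (Mk k)) (Finsupp.single (J - J₁) 1) =
      if J₁ = A then (if J - J₁ = B then 1 else 0) else 0 := by
    intro J₁ _
    simp [Finsupp.lapply_apply, Finsupp.single_apply]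
    split <;> split <;> simp_all
  rw [Finset.sum_congr rfl this, Finset.sum_ite_eq' (Finset.Iic J) A]
  simp only [Finsupp.lapply_apply, Finsupp.single_apply, Finset.mem_Iic]
  by_cases h : A + B = J
  · subst h
    simp [add_tsub_cancel_left, le_self_add]
  · by_cases hA : A ≤ J
    · have : J - A ≠ B := fun hB => h (by rw [← hB, add_tsub_cancel_of_le hA])
      simp [hA, this, Ne.symm h]
    · simp [hA, Ne.symm h]


lemma convPow_lapply (k : ℕ) (A : Fin k → ℕ) (n : ℕ) :
    convPow k (Finsupp.lapply A) n = (Finsupp.lapply (n • A) : Module.Dual (ZMod 2) (Mk k)) := by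
  induction n with
  | zero =>
      show oneD k = _
      rw [zero_smul]
      rfl
  | succ n ih =>
    rw [convPow, ih, conv_lapply]
    congr 1
    rw [succ_nsmul']

lemma foldr_lapply (k : ℕ) (L : List (Fin k → ℕ)) :
    (L.map fun A => (Finsupp.lapply A : Module.Dual (ZMod 2) (Mk k))).foldr (conv k) (oneD k)
      = Finsupp.lapply L.sum := by
  induction L with
  | nil => rfl
  | cons a t ih => simp only [List.map_cons, List.foldr_cons, ih, conv_lapply, List.sum_cons]

lemma xi_eq (k : ℕ) (Λ : Fin k → ℕ) : xi k Λ = Finsupp.lapply Λ := by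
  have h1 : (List.ofFn fun i : Fin k => convPow k (y k i) (Λ i)) =
      (List.ofFn fun i : Fin k => Pi.single i (Λ i)).map
        (fun A => (Finsupp.lapply A : Module.Dual (ZMod 2) (Mk k))) := by
    rw [List.map_ofFn]
    congr 1
    funext i
    show convPow k (Finsupp.lapply (Pi.single i 1)) (Λ i) = _
    rw [convPow_lapply]
    congr 1
    ext j
    simp [Pi.single_apply]
  rw [xi, h1, foldr_lapply]
  congr 1
  rw [List.sum_ofFn]
  exact Finset.univ_sum_single Λ

lemma xi_single (k : ℕ) (Λ J : Fin k → ℕ) :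
    xi k Λ (Finsupp.single J 1) = if Λ = J then 1 else 0 := by
  rw [xi_eq]
  simp only [Finsupp.lapply_apply, Finsupp.single_apply]
  by_cases h : Λ = J <;> simp [h, Ne.symm]

/-- `F₀[k]*` is a polynomial algebra on `y_{k,1}, ..., y_{k,k}` : the monomials
`ξ^Λ`, `Λ ∈ ℕ^k`, are linearly independent; they span the (graded) dual, i.e. every
functional vanishing in all sufficiently large degrees lies in their span; and the
pairing satisfies `⟨ξ^Λ, Q^J⟩ = 1 → Λ(I) ≤ J` in the excess order, where
`Λ(I) = Σ_i λ_i I(x_{k,i})` (which is `Λ` itself as a sequence). -/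
theorem dual_polynomial (k : ℕ) :
    LinearIndependent (ZMod 2) (fun Λ : Fin k → ℕ => xi k Λ) ∧
    (∀ f : Module.Dual (ZMod 2) (Mk k),
        (∃ d : ℕ, ∀ J : Fin k → ℕ, d < ∑ i, J i → f (Finsupp.single J 1) = 0) →
        f ∈ Submodule.span (ZMod 2) (Set.range (xi k))) ∧
    (∀ (Λ J : Fin k → ℕ), xi k Λ (Finsupp.single J 1) = 1 → exLE Λ J) := by
  refine ⟨?_, ?_, ?_⟩
  · rw [linearIndependent_iff]
    intro l hl
    ext J
    have h := congrArg (fun f => f (Finsupp.single J 1)) hl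
    simp only [Finsupp.linearCombination_apply, Finsupp.sum, LinearMap.zero_apply] at h
    rw [LinearMap.coe_sum, Finset.sum_apply] at h
    simp only [LinearMap.smul_apply, xi_single, smul_eq_mul, mul_ite, mul_one,
      mul_zero] at h
    rw [Finset.sum_ite_eq' l.support J] at h
    by_cases hJ : J ∈ l.support
    · rw [if_pos hJ] at h; simpa using h
    · simpa using Finsupp.notMem_support_iff.mp hJ
  · rintro f ⟨d, hd⟩
    have key : f = ∑ Λ ∈ Finset.Iic (fun _ : Fin k => d),
        f (Finsupp.single Λ 1) • xi k Λ := by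
      apply Finsupp.lhom_ext
      intro J c
      have h1 : (Finsupp.single J c : Mk k) = c • Finsupp.single J 1 := by
        simp [Finsupp.smul_single]
      rw [h1, map_smul, map_smul]
      congr 1
      rw [LinearMap.coe_sum, Finset.sum_apply]
      simp only [LinearMap.smul_apply, xi_single, smul_eq_mul, mul_ite, mul_one, mul_zero]
      rw [Finset.sum_ite_eq' _ J]
      by_cases hJ : J ∈ Finset.Iic (fun _ : Fin k => d)
      · rw [if_pos hJ]
      · rw [if_neg hJ]
        refine hd J ?_
        simp only [Finset.mem_Iic, Pi.le_def, not_forall, not_le] at hJ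
        obtain ⟨i, hi⟩ := hJ
        exact lt_of_lt_of_le hi (Finset.single_le_sum (fun j _ => Nat.zero_le _)
          (Finset.mem_univ i))
    rw [key]
    exact Submodule.sum_mem _ fun Λ _ =>
      Submodule.smul_mem _ _ (Submodule.subset_span ⟨Λ, rfl⟩)
  · intro Λ J h
    rw [xi_single] at h
    by_cases he : Λ = J
    · exact Or.inl he
    · rw [if_neg he] at h
      exact absurd h (by decide)

end
end

section
/- For 0 ≤ t ≤ k−1 define Madsen's sequences I_{k,t} = (2^{k−1} − 2^{t−1}, 2^{k−2} − 2^{t−2}, ..., 2^{k−t} − 1, 2^{k−t−1}, ..., 2, 1) ∈ ℕ^k (with the convention that the term 2^{−1} is omitted, so I_{k,0} = (2^{k−1}, 2^{k−2}, ..., 2, 1)). Then |I_{k,t}| = 2^k − 2^t, and every admissible sequence I of length k and positive degree with nonnegative excess can be written uniquely as I = Σ_{t=0}^{k−1} a_t I_{k,t} with a_t ∈ ℕ. -/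
/-- Madsen's sequences
`I_{k,t} = (2^{k−1} − 2^{t−1}, 2^{k−2} − 2^{t−2}, ..., 2^{k−t} − 1, 2^{k−t−1}, ..., 2, 1)`
(with the term `2^{−1}` omitted, so `I_{k,0} = (2^{k−1},...,2,1)`), encoded as functions
`ℕ → ℕ` with index `i` the `(i+1)`-st entry from the right: entry `2^i − 2^{i+t−k}` when
`k ≤ i + t`, entry `2^i` otherwise. -/
def Ikt (k t : ℕ) : ℕ → ℕ := fun i =>
  if i < k then (if k ≤ i + t then 2 ^ i - 2 ^ (i + t - k) else 2 ^ i) else 0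

/-- Dyer-Lashof admissibility: each entry is at most twice the next, `i_{j+1} ≤ 2 i_j`. -/
def DLAdmissible (k : ℕ) (I : ℕ → ℕ) : Prop := ∀ j, j + 1 < k → I (j + 1) ≤ 2 * I j

/-- Nonnegative excess: `e(I) = i_k − (i_{k−1} + ⋯ + i_1) ≥ 0`. -/
def NonnegExcess (k : ℕ) (I : ℕ → ℕ) : Prop :=
  ∑ i ∈ Finset.range (k - 1), I i ≤ I (k - 1)

/-!
The sequences `I_{k,t}` are a dual basis for the defects of a sequence of length `k`: its
excess `i_k − (i_{k−1} + ⋯ + i_1)` and its slacks `2 i_j − i_{j+1}`. Indeed `I_{k,0}` doubles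
at every step and has excess `1`, while for `t ≥ 1` the sequence `I_{k,t}` has excess `0` and
doubles at every step but one, where it falls short by exactly `1`. Conversely a sequence is
determined by its defects: summing the slacks telescopes to `i_1` minus the excess, and the
slacks then give the remaining entries one by one. Hence `I = Σ a_t I_{k,t}` where `a_t` is the
defect of `I` matched with `I_{k,t}`, and these are natural numbers precisely because `I` is
admissible with nonnegative excess.
-/

open Finset

namespace Madsen

def slack (I : ℕ → ℤ) (j : ℕ) : ℤ := 2 * I j - I (j + 1)

def excess (n : ℕ) (I : ℕ → ℤ) : ℤ := I n - ∑ i ∈ range n, I i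

theorem excess_eq_sub_sum_slack (n : ℕ) (I : ℕ → ℤ) :
    excess n I = I 0 - ∑ j ∈ range n, slack I j := by
  induction n with
  | zero => simp [excess]
  | succ n ih =>
    simp only [excess, slack, sum_range_succ] at ih ⊢
    linarith

theorem eq_of_slack_eq_of_excess_eq {n : ℕ} {I J : ℕ → ℤ}
    (hs : ∀ j < n, slack I j = slack J j) (he : excess n I = excess n J) :
    ∀ i ≤ n, I i = J i := by
  intro i hi
  induction i with
  | zero =>
    rw [excess_eq_sub_sum_slack, excess_eq_sub_sum_slack,
      sum_congr rfl fun j hj => hs j (mem_range.mp hj)] at he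
    linarith
  | succ i ih =>
    have hsi := hs i (by omega)
    simp only [slack] at hsi
    linarith [ih (by omega)]

section Linearity

variable {ι : Type*} (s : Finset ι) (a : ι → ℤ) (f : ι → ℕ → ℤ)

theorem slack_sum_mul (j : ℕ) :
    slack (fun i => ∑ t ∈ s, a t * f t i) j = ∑ t ∈ s, a t * slack (f t) j := by
  simp only [slack, mul_sum, ← sum_sub_distrib]
  exact sum_congr rfl fun t _ => by ring

theorem excess_sum_mul (n : ℕ) :
    excess n (fun i => ∑ t ∈ s, a t * f t i) = ∑ t ∈ s, a t * excess n (f t) := by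
  simp only [excess, mul_sub, mul_sum, sum_sub_distrib]
  rw [sum_comm]

end Linearity

theorem Ikt_apply_zero {k t : ℕ} (ht : t < k) : Ikt k t 0 = 1 := by
  simp [Ikt, show 0 < k by omega, show ¬ k ≤ t by omega]

theorem slack_Ikt {k t j : ℕ} (ht : t < k) (hj : j + 1 < k) :
    slack (fun i => (Ikt k t i : ℤ)) j = if j + t + 1 = k then 1 else 0 := by
  have hpow : 2 ^ (j + 1) = 2 * 2 ^ j := pow_succ' 2 j
  simp only [slack, Ikt, if_pos hj, if_pos (show j < k by omega)]
  split_ifs with h₁ h₂ h₃ <;> try omega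
  · obtain ⟨m, rfl⟩ : ∃ m, j = k - t + m := ⟨j + t - k, by omega⟩
    have hm : 2 ^ m ≤ 2 ^ (k - t + m) := Nat.pow_le_pow_right two_pos (by omega)
    have hm' : 2 ^ (m + 1) = 2 * 2 ^ m := pow_succ' 2 m
    rw [show k - t + m + t - k = m by omega, show k - t + m + 1 + t - k = m + 1 by omega]
    omega
  · rw [show j + 1 + t - k = 0 by omega, pow_zero]
    have : 1 ≤ 2 ^ j := Nat.one_le_two_pow
    omega

theorem excess_Ikt {k t : ℕ} (ht : t < k) :
    excess (k - 1) (fun i => (Ikt k t i : ℤ)) = if t = 0 then 1 else 0 := by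
  rw [excess_eq_sub_sum_slack, Ikt_apply_zero ht,
    sum_congr rfl fun j hj => slack_Ikt ht (by rw [mem_range] at hj; omega)]
  rcases t with _ | t
  · rw [sum_eq_zero fun j hj => if_neg (by rw [mem_range] at hj; omega)]
    simp
  · rw [sum_eq_single_of_mem (k - 2 - t) (mem_range.mpr (by omega))
      fun j _ hj => if_neg (by omega), if_pos (by omega)]
    simp

theorem sum_range_Ikt {k t : ℕ} (ht : t ≤ k) :
    ∑ i ∈ range k, Ikt k t i = 2 ^ k - 2 ^ t := by
  obtain ⟨s, rfl⟩ : ∃ s, k = s + t := ⟨k - t, by omega⟩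
  have hlow : ∀ i ∈ range s, Ikt (s + t) t i = 2 ^ i := fun i hi => by
    have := mem_range.mp hi
    simp [Ikt, show i < s + t by omega, show ¬ s + t ≤ i + t by omega]
  have hhigh : ∀ j ∈ range t, Ikt (s + t) t (s + j) = 2 ^ j * (2 ^ s - 1) := fun j hj => by
    have := mem_range.mp hj
    simp [Ikt, show s + j < s + t by omega, show s + j + t - (s + t) = j by omega, pow_add,
      Nat.mul_sub_one, mul_comm]
  rw [sum_range_add, sum_congr rfl hlow, sum_congr rfl hhigh, ← sum_mul,
    Nat.geomSum_eq le_rfl, Nat.geomSum_eq le_rfl, Nat.div_one, Nat.div_one]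
  have h2s : 1 ≤ 2 ^ s := Nat.one_le_two_pow
  have h2t : 1 ≤ 2 ^ t := Nat.one_le_two_pow
  have h2st : 2 ^ t ≤ 2 ^ (s + t) := Nat.pow_le_pow_right two_pos (Nat.le_add_left t s)
  zify [h2s, h2t, h2st]
  push_cast [pow_add]
  ring

def coeff (k : ℕ) (I : ℕ → ℤ) (t : ℕ) : ℤ :=
  if k ≤ t then 0 else if t = 0 then excess (k - 1) I else slack I (k - 1 - t)

theorem coeff_of_le {k t : ℕ} (I : ℕ → ℤ) (h : k ≤ t) : coeff k I t = 0 := if_pos h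

theorem coeff_zero {k : ℕ} (I : ℕ → ℤ) (hk : 0 < k) : coeff k I 0 = excess (k - 1) I := by
  rw [coeff, if_neg (by omega), if_pos rfl]

theorem coeff_of_ne_zero {k t : ℕ} (I : ℕ → ℤ) (ht : t < k) (h₀ : t ≠ 0) :
    coeff k I t = slack I (k - 1 - t) := by
  rw [coeff, if_neg (by omega), if_neg h₀]

theorem coeff_nonneg {k : ℕ} {I : ℕ → ℕ} (hadm : DLAdmissible k I) (hexc : NonnegExcess k I)
    (t : ℕ) : 0 ≤ coeff k (fun i => (I i : ℤ)) t := by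
  unfold coeff
  split_ifs with h₀ h₁
  · rfl
  · simp only [excess, sub_nonneg]
    exact_mod_cast hexc
  · have := hadm (k - 1 - t) (by omega)
    simp only [slack]
    omega

theorem eq_of_coeff_eq {k : ℕ} {I J : ℕ → ℤ} (h : coeff k I = coeff k J) (i : ℕ) (hi : i < k) :
    I i = J i := by
  refine eq_of_slack_eq_of_excess_eq (n := k - 1) (fun j hj => ?_) ?_ i (by omega)
  · have hj' := congrFun h (k - 1 - j)
    rwa [coeff_of_ne_zero _ (by omega) (by omega), coeff_of_ne_zero _ (by omega) (by omega),
      show k - 1 - (k - 1 - j) = j by omega] at hj'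
  · simpa only [coeff_zero _ (show 0 < k by omega)] using congrFun h 0

theorem coeff_sum_mul_Ikt {k : ℕ} {a : ℕ → ℤ} (ha : ∀ t, k ≤ t → a t = 0) :
    coeff k (fun i => ∑ t ∈ range k, a t * Ikt k t i) = a := by
  funext s
  by_cases hs : s < k
  · rcases s with _ | s
    · rw [coeff_zero _ hs, excess_sum_mul,
        sum_congr rfl fun t ht => by rw [excess_Ikt (mem_range.mp ht)]]
      simp [hs]
    · rw [coeff_of_ne_zero _ hs (Nat.succ_ne_zero s), slack_sum_mul,
        sum_congr rfl fun t ht => by rw [slack_Ikt (mem_range.mp ht) (by omega)],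
        sum_eq_single_of_mem (s + 1) (mem_range.mpr hs) fun t _ ht => by
          rw [if_neg (by omega), mul_zero], if_pos (by omega), mul_one]
  · rw [coeff_of_le _ (not_lt.mp hs), ha s (not_lt.mp hs)]

theorem eq_sum_coeff_mul_Ikt {k : ℕ} {I : ℕ → ℤ} (hI : ∀ i, k ≤ i → I i = 0) :
    I = fun i => ∑ t ∈ range k, coeff k I t * Ikt k t i := by
  funext i
  by_cases hi : i < k
  · exact eq_of_coeff_eq (coeff_sum_mul_Ikt fun t => coeff_of_le I).symm i hi
  · simp [hI i (by omega), Ikt, hi]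

end Madsen

open Madsen

theorem Ikt_decomposition_general (k : ℕ) :
    (∀ t, t ≤ k - 1 → ∑ i ∈ Finset.range k, Ikt k t i = 2 ^ k - 2 ^ t) ∧
    (∀ I : ℕ → ℕ, (∀ i, k ≤ i → I i = 0) → DLAdmissible k I → NonnegExcess k I →
        0 < ∑ i ∈ Finset.range k, I i →
        ∃! a : ℕ → ℕ, (∀ t, k ≤ t → a t = 0) ∧
          ∀ i, I i = ∑ t ∈ Finset.range k, a t * Ikt k t i) := by
  refine ⟨fun t ht => sum_range_Ikt (by omega), fun I hsupp hadm hexc _ => ?_⟩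
  set c := coeff k (fun i => (I i : ℤ))
  have hc : ∀ t, ((c t).toNat : ℤ) = c t := fun t => Int.toNat_of_nonneg (coeff_nonneg hadm hexc t)
  refine ⟨fun t => (c t).toNat, ⟨fun t ht => by simp [c, coeff_of_le _ ht], fun i => ?_⟩,
    fun b ⟨hb0, hb⟩ => ?_⟩
  · have hI := congrFun (eq_sum_coeff_mul_Ikt (I := fun i => (I i : ℤ)) (by simpa using hsupp)) i
    zify
    simpa [hc] using hI
  · have hIb : (fun i => (I i : ℤ)) = fun i => ∑ t ∈ range k, (b t : ℤ) * Ikt k t i := by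
      funext i
      exact_mod_cast hb i
    have hcb : c = fun t => (b t : ℤ) := by
      rw [show c = coeff k _ from rfl, hIb]
      exact coeff_sum_mul_Ikt (by simpa using hb0)
    funext t
    simp [hcb]

/-- `|I_{k,t}| = 2^k − 2^t` for `0 ≤ t ≤ k−1`, and every admissible sequence `I` of
length `k`, positive degree and nonnegative excess can be written uniquely as
`I = Σ_{t=0}^{k−1} a_t I_{k,t}` with `a_t ∈ ℕ`. -/
theorem Ikt_decomposition (k : ℕ) (hk : 1 ≤ k) :
    (∀ t, t ≤ k - 1 → ∑ i ∈ Finset.range k, Ikt k t i = 2 ^ k - 2 ^ t) ∧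
    (∀ I : ℕ → ℕ, (∀ i, k ≤ i → I i = 0) → DLAdmissible k I → NonnegExcess k I →
        0 < ∑ i ∈ Finset.range k, I i →
        ∃! a : ℕ → ℕ, (∀ t, k ≤ t → a t = 0) ∧
          ∀ i, I i = ∑ t ∈ Finset.range k, a t * Ikt k t i) :=
  Ikt_decomposition_general k
end
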